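/- arXiv:2302.05054 — 4 statements merged into one kernel-verified Lean document; each statement's English description precedes it below -/
import Mathlib

section
/- Given a left recollement of a triangulated category T in terms of T' and T'' (functors i^* ⊣ i_* : T' → T fully faithful, j_! ⊣ j^* with j_! fully faithful, j^* i_* = 0, and for each X a triangle j_! j^* X → X → i_* i^* X → j_! j^* X[1]), which restricts to a left recollement of a triangulated subcategory S ⊆ T in terms of S' ⊆ T' and S'' ⊆ T'', the induced functors on Verdier quotients form a left recollement of T/S in terms of T'/S' and T''/S''. -/
/-!
The adjunctions `i^* ⊣ i_*` and `j_! ⊣ j^*` descend to the Verdier quotients. Since the quotient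
functors are essentially surjective, the units and counits downstairs are, up to isomorphism,
images of those upstairs: the counit of `i^* ⊣ i_*` and the unit of `j_! ⊣ j^*` stay invertible,
so the induced `i_*` and `j_!` are fully faithful, and the canonical triangle of `Q X` is the
image of the canonical triangle of `X` under the triangulated functor `Q`.
-/

open CategoryTheory Limits Pretriangulated

universe w v u

namespace Paper

section Summands

variable {C : Type*} {D : Type*} [Category C] [Category D]

/-- Every object of the target is a direct summand (retract) of an object in the image. -/
def DenseUpToSummands (F : C ⥤ D) : Prop :=
  ∀ X : D, ∃ (A : C) (s : X ⟶ F.obj A) (r : F.obj A ⟶ X), s ≫ r = 𝟙 X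

/-- A functor is an equivalence up to direct summands if it is fully faithful and
every object of the target is a direct summand of an object in its image. -/
structure IsEquivalenceUpToSummands (F : C ⥤ D) : Prop where
  full : F.Full
  faithful : F.Faithful
  dense : DenseUpToSummands F

end Summands

section LeftRec

variable {T' T T'' : Type*} [Category T'] [Category T'']
  [Category T] [HasZeroObject T] [HasShift T ℤ] [Preadditive T]
  [∀ n : ℤ, (shiftFunctor T n).Additive] [Pretriangulated T]

/-- The four functors `(i^*, i_*, j_!, j^*)` form a left recollement of `T` in terms of
`T'` and `T''`: `(i^*, i_*)` and `(j_!, j^*)` are adjoint pairs, `i_*` and `j_!` are fully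
faithful, `j^* ∘ i_* = 0`, and for every `X` there is a distinguished triangle
`j_! j^* X → X → i_* i^* X → (j_! j^* X)[1]` whose first two maps are the counit and the
unit. -/
def IsLeftRecollement (iStar : T ⥤ T') (iS : T' ⥤ T)
    (jShriek : T'' ⥤ T) (jStar : T ⥤ T'') : Prop :=
  ∃ (a : iStar ⊣ iS) (b : jShriek ⊣ jStar),
    iS.Full ∧ iS.Faithful ∧ jShriek.Full ∧ jShriek.Faithful ∧
    (∀ X : T', IsZero (jStar.obj (iS.obj X))) ∧
    (∀ X : T, ∃ h : iS.obj (iStar.obj X) ⟶ (jShriek.obj (jStar.obj X))⟦(1 : ℤ)⟧,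
      Triangle.mk (b.counit.app X) (a.unit.app X) h ∈ distTriang T)

end LeftRec

section LocalizedAdjunction

variable {C₁ C₂ D₁ D₂ : Type*} [Category C₁] [Category C₂] [Category D₁] [Category D₂]
  {G : C₁ ⥤ C₂} {F : C₂ ⥤ C₁} (adj : G ⊣ F)
  (L₁ : C₁ ⥤ D₁) (W₁ : MorphismProperty C₁) [L₁.IsLocalization W₁]
  (L₂ : C₂ ⥤ D₂) (W₂ : MorphismProperty C₂) [L₂.IsLocalization W₂]
  (G' : D₁ ⥤ D₂) (F' : D₂ ⥤ D₁) [CatCommSq G L₁ L₂ G'] [CatCommSq F L₂ L₁ F']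

lemma isIso_localization_unit [IsIso adj.unit] :
    IsIso (adj.localization L₁ W₁ L₂ W₂ G' F').unit := by
  set ε := (adj.localization L₁ W₁ L₂ W₂ G' F').unit
  have : ∀ X, IsIso ((((Functor.whiskeringLeft C₁ D₁ D₁).obj L₁).map ε).app X) := fun X => by
    simp only [ε, Functor.whiskeringLeft_obj_map, Functor.whiskerLeft_app,
      Adjunction.localization_unit_app]
    infer_instance
  have := NatIso.isIso_of_isIso_app (((Functor.whiskeringLeft C₁ D₁ D₁).obj L₁).map ε)
  exact (Localization.fullyFaithfulWhiskeringLeft L₁ W₁ D₁).isIso_of_isIso_map ε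

lemma isIso_localization_counit [IsIso adj.counit] :
    IsIso (adj.localization L₁ W₁ L₂ W₂ G' F').counit := by
  set η := (adj.localization L₁ W₁ L₂ W₂ G' F').counit
  have : ∀ X, IsIso ((((Functor.whiskeringLeft C₂ D₂ D₂).obj L₂).map η).app X) := fun X => by
    simp only [η, Functor.whiskeringLeft_obj_map, Functor.whiskerLeft_app,
      Adjunction.localization_counit_app]
    infer_instance
  have := NatIso.isIso_of_isIso_app (((Functor.whiskeringLeft C₂ D₂ D₂).obj L₂).map η)
  exact (Localization.fullyFaithfulWhiskeringLeft L₂ W₂ D₂).isIso_of_isIso_map η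

end LocalizedAdjunction

lemma isZero_obj_of_iso_comp {C C' D D' : Type*} [Category C] [Category C'] [Category D]
    [Category D'] [HasZeroMorphisms C'] [HasZeroMorphisms D'] (L : C ⥤ D) [L.EssSurj]
    (L' : C' ⥤ D') [L'.PreservesZeroMorphisms] {H : C ⥤ C'} {H' : D ⥤ D'}
    (e : H ⋙ L' ≅ L ⋙ H') (hH : ∀ X, IsZero (H.obj X)) (Y : D) : IsZero (H'.obj Y) :=
  (L'.map_isZero (hH (L.objPreimage Y))).of_iso
    (H'.mapIso (L.objObjPreimageIso Y).symm ≪≫ e.symm.app _)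

section Triangles

variable {D : Type*} [Category D] [HasZeroObject D] [HasShift D ℤ] [Preadditive D]
  [∀ n : ℤ, (shiftFunctor D n).Additive] [Pretriangulated D]

lemma exists_distinguished_mk_of_iso {A A' B B' C C' : D} {f : A ⟶ B} {g : B ⟶ C}
    {h : C ⟶ A⟦(1 : ℤ)⟧} (hT : Triangle.mk f g h ∈ distTriang D)
    (α : A' ≅ A) (β : B ≅ B') (γ : C ≅ C') :
    ∃ h' : C' ⟶ A'⟦(1 : ℤ)⟧,
      Triangle.mk (α.hom ≫ f ≫ β.hom) (β.inv ≫ g ≫ γ.hom) h' ∈ distTriang D := by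
  refine ⟨γ.inv ≫ h ≫ α.inv⟦(1 : ℤ)⟧', isomorphic_distinguished _ hT _ <|
    Triangle.isoMk _ _ α β.symm γ.symm ?_ ?_ ?_⟩ <;>
  -- `Triangle.mk` is not reducible: unfold it so that `simp` sees the objects it reassociates
  · unfold Triangle.mk
    simp

lemma exists_distinguished_mk_app_of_iso {F G : D ⥤ D} (u : F ⟶ 𝟭 D) (v : 𝟭 D ⟶ G)
    {X Y : D} (e : X ≅ Y)
    (hX : ∃ h : G.obj X ⟶ (F.obj X)⟦(1 : ℤ)⟧, Triangle.mk (u.app X) (v.app X) h ∈ distTriang D) :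
    ∃ h : G.obj Y ⟶ (F.obj Y)⟦(1 : ℤ)⟧, Triangle.mk (u.app Y) (v.app Y) h ∈ distTriang D := by
  obtain ⟨h, hT⟩ := hX
  have hu : u.app Y = (F.mapIso e.symm).hom ≫ u.app X ≫ e.hom := by simp
  have hv : v.app Y = e.inv ≫ v.app X ≫ (G.mapIso e).hom := by simp [← v.naturality]
  rw [hu, hv]
  exact exists_distinguished_mk_of_iso hT _ _ _

end Triangles

lemma exists_distinguished_mk_localization_counit_unit_app
    {C C₁ C₂ D D₁ D₂ : Type*} [Category C] [Category C₁] [Category C₂] [Category D]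
    [Category D₁] [Category D₂]
    [HasZeroObject C] [HasShift C ℤ] [Preadditive C] [∀ n : ℤ, (shiftFunctor C n).Additive]
    [Pretriangulated C]
    [HasZeroObject D] [HasShift D ℤ] [Preadditive D] [∀ n : ℤ, (shiftFunctor D n).Additive]
    [Pretriangulated D]
    (L : C ⥤ D) (W : MorphismProperty C) [L.IsLocalization W] [L.CommShift ℤ] [L.IsTriangulated]
    (L₁ : C₁ ⥤ D₁) (W₁ : MorphismProperty C₁) [L₁.IsLocalization W₁]
    (L₂ : C₂ ⥤ D₂) (W₂ : MorphismProperty C₂) [L₂.IsLocalization W₂]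
    {iStar : C ⥤ C₁} {iS : C₁ ⥤ C} (a : iStar ⊣ iS)
    {jShriek : C₂ ⥤ C} {jStar : C ⥤ C₂} (b : jShriek ⊣ jStar)
    (iStar' : D ⥤ D₁) (iS' : D₁ ⥤ D) (jShriek' : D₂ ⥤ D) (jStar' : D ⥤ D₂)
    [CatCommSq iStar L L₁ iStar'] [CatCommSq iS L₁ L iS']
    [CatCommSq jShriek L₂ L jShriek'] [CatCommSq jStar L L₂ jStar'] {Y : C}
    (hY : ∃ h : iS.obj (iStar.obj Y) ⟶ (jShriek.obj (jStar.obj Y))⟦(1 : ℤ)⟧,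
      Triangle.mk (b.counit.app Y) (a.unit.app Y) h ∈ distTriang C) :
    ∃ h, Triangle.mk ((b.localization L₂ W₂ L W jShriek' jStar').counit.app (L.obj Y))
      ((a.localization L W L₁ W₁ iStar' iS').unit.app (L.obj Y)) h ∈ distTriang D := by
  obtain ⟨h, hT⟩ := hY
  let α := jShriek'.mapIso ((CatCommSq.iso jStar L L₂ jStar').app Y).symm ≪≫
    ((CatCommSq.iso jShriek L₂ L jShriek').app (jStar.obj Y)).symm
  let γ := (CatCommSq.iso iS L₁ L iS').app (iStar.obj Y) ≪≫
    iS'.mapIso ((CatCommSq.iso iStar L L₁ iStar').app Y)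
  have hcounit : (b.localization L₂ W₂ L W jShriek' jStar').counit.app (L.obj Y) =
      α.hom ≫ L.map (b.counit.app Y) ≫ (Iso.refl _).hom := by
    simp [α]
  have hunit : (a.localization L W L₁ W₁ iStar' iS').unit.app (L.obj Y) =
      (Iso.refl _).inv ≫ L.map (a.unit.app Y) ≫ γ.hom := by
    simp [γ]
  rw [hcounit, hunit]
  exact exists_distinguished_mk_of_iso (L.map_distinguished _ hT) α (Iso.refl _) γ

/-- A left recollement of `T` in terms of `T'` and `T''` which restricts
to a left recollement of a triangulated subcategory `S ⊆ T` in terms of `S' ⊆ T'` and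
`S'' ⊆ T''` induces a left recollement of `T/S` in terms of `T'/S'` and `T''/S''`. -/
theorem statement3
    {T' T T'' : Type u}
    [Category.{v} T'] [HasZeroObject T'] [HasShift T' ℤ] [Preadditive T']
    [∀ n : ℤ, (shiftFunctor T' n).Additive] [Pretriangulated T'] [IsTriangulated T']
    [Category.{v} T] [HasZeroObject T] [HasShift T ℤ] [Preadditive T]
    [∀ n : ℤ, (shiftFunctor T n).Additive] [Pretriangulated T] [IsTriangulated T]
    [Category.{v} T''] [HasZeroObject T''] [HasShift T'' ℤ] [Preadditive T'']
    [∀ n : ℤ, (shiftFunctor T'' n).Additive] [Pretriangulated T''] [IsTriangulated T'']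
    (iStar : T ⥤ T') [iStar.CommShift ℤ] [iStar.IsTriangulated]
    (iS : T' ⥤ T) [iS.CommShift ℤ] [iS.IsTriangulated]
    (jShriek : T'' ⥤ T) [jShriek.CommShift ℤ] [jShriek.IsTriangulated]
    (jStar : T ⥤ T'') [jStar.CommShift ℤ] [jStar.IsTriangulated]
    (hrec : IsLeftRecollement iStar iS jShriek jStar)
    (S' : ObjectProperty T') [S'.IsTriangulated] (S : ObjectProperty T) [S.IsTriangulated]
    (S'' : ObjectProperty T'') [S''.IsTriangulated]
    -- the left recollement restricts to the subcategories
    (hiS : ∀ X : T', S' X → S (iS.obj X))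
    (hiStar : ∀ X : T, S X → S' (iStar.obj X))
    (hjShriek : ∀ X : T'', S'' X → S (jShriek.obj X))
    (hjStar : ∀ X : T, S X → S'' (jStar.obj X))
    -- induced functors between the Verdier quotients
    (iStarBar : S.trW.Localization ⥤ S'.trW.Localization)
    (_ : S.trW.Q ⋙ iStarBar ≅ iStar ⋙ S'.trW.Q)
    (iSBar : S'.trW.Localization ⥤ S.trW.Localization)
    (_ : S'.trW.Q ⋙ iSBar ≅ iS ⋙ S.trW.Q)
    (jShriekBar : S''.trW.Localization ⥤ S.trW.Localization)
    (_ : S''.trW.Q ⋙ jShriekBar ≅ jShriek ⋙ S.trW.Q)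
    (jStarBar : S.trW.Localization ⥤ S''.trW.Localization)
    (_ : S.trW.Q ⋙ jStarBar ≅ jStar ⋙ S''.trW.Q) :
    IsLeftRecollement iStarBar iSBar jShriekBar jStarBar := by
  rename_i eiStar eiS ejShriek ejStar
  obtain ⟨a, b, _, _, _, _, hzero, htri⟩ := hrec
  let : CatCommSq iStar S.trW.Q S'.trW.Q iStarBar := ⟨eiStar.symm⟩
  let : CatCommSq iS S'.trW.Q S.trW.Q iSBar := ⟨eiS.symm⟩
  let : CatCommSq jShriek S''.trW.Q S.trW.Q jShriekBar := ⟨ejShriek.symm⟩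
  let : CatCommSq jStar S.trW.Q S''.trW.Q jStarBar := ⟨ejStar.symm⟩
  let a' := a.localization S.trW.Q S.trW S'.trW.Q S'.trW iStarBar iSBar
  let b' := b.localization S''.trW.Q S''.trW S.trW.Q S.trW jShriekBar jStarBar
  have := isIso_localization_counit a S.trW.Q S.trW S'.trW.Q S'.trW iStarBar iSBar
  have := isIso_localization_unit b S''.trW.Q S''.trW S.trW.Q S.trW jShriekBar jStarBar
  have hiSBar := a'.fullyFaithfulROfIsIsoCounit
  have hjShriekBar := b'.fullyFaithfulLOfIsIsoUnit
  have : S.trW.Q.EssSurj := Localization.essSurj _ S.trW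
  have : S'.trW.Q.EssSurj := Localization.essSurj _ S'.trW
  refine ⟨a', b', hiSBar.full, hiSBar.faithful, hjShriekBar.full, hjShriekBar.faithful,
    isZero_obj_of_iso_comp S'.trW.Q S''.trW.Q
      (CatCommSq.hComp iS jStar S'.trW.Q S.trW.Q S''.trW.Q iSBar jStarBar).iso hzero, fun X => ?_⟩
  exact exists_distinguished_mk_app_of_iso _ _ (S.trW.Q.objObjPreimageIso X)
    (exists_distinguished_mk_localization_counit_unit_app S.trW.Q S.trW S'.trW.Q S'.trW
      S''.trW.Q S''.trW a b iStarBar iSBar jShriekBar jStarBar (htri _))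

end Paper
end

section
/- Assume a diagram of six triangle functors (i^*, i_*, i^!, j_!, j^*, j_*) between triangulated categories T', T, T'' satisfying that (i^*, i_*, i^!) and (j_!, j^*, j_*) are adjoint triples. If any one of the three rows (i^* and j_!; i_* and j^*; i^! and j_*) is a short exact sequence of triangulated categories, then the diagram is a recollement. -/
/-!
Whichever row is short exact, its second functor is a Verdier localization at `S.trW`, where `S`
is the essential image of the first. An adjoint of a localization functor is fully faithful, and
in an adjoint triple the outer functors are fully faithful together; adjunction turns the
vanishing of the row into `j^* i_* = 0`. A localization at `S.trW` kills no nonzero object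
orthogonal to `S`, which puts the kernel of `j^*` into the essential image of `i_*`, and then the
kernel of `i^*` into that of `j_!`. Finally, completing the unit `X ⟶ j_* j^* X` to a triangle
`Y ⟶ X ⟶ j_* j^* X ⟶ Y⟦1⟧` puts `Y` into the essential image of `i_*` with `Y ⟶ X` coreflecting
onto it, as does the counit `i_* i^! X ⟶ X`; so `Y ≅ i_* i^! X` over `X`. The other gluing
triangle is obtained in the same way.
-/

open CategoryTheory Limits Pretriangulated

universe w v u

namespace Paper

section SES

variable {T'' T T' : Type*} [Category T''] [Category T']
  [Category T] [HasZeroObject T] [HasShift T ℤ] [Preadditive T]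
  [∀ n : ℤ, (shiftFunctor T n).Additive] [Pretriangulated T]

/-- The sequence `T'' ⟶ T ⟶ T'` is a short exact sequence of triangulated categories
up to direct summands: `G` is fully faithful, `F ∘ G = 0`, and the functor induced by `F`
on the Verdier quotient of `T` by the essential image of `G` is an equivalence up to
direct summands. The Verdier quotient is encoded by the localization of `T` at `S.W`,
for any triangulated subcategory `S` whose objects are exactly those in the essential
image of `G`, and the induced functor is any functor `Fbar` compatible with `F`. -/
structure IsShortExactUpToSummands (G : T'' ⥤ T) (F : T ⥤ T') : Prop where
  full : G.Full
  faithful : G.Faithful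
  zero : ∀ X : T'', IsZero (F.obj (G.obj X))
  quotient_equiv :
    ∀ (S : ObjectProperty T) [S.IsTriangulated]
      (_ : ∀ X : T, S X ↔ ∃ A : T'', Nonempty (X ≅ G.obj A))
      (Fbar : S.trW.Localization ⥤ T') (_ : S.trW.Q ⋙ Fbar ≅ F),
      IsEquivalenceUpToSummands Fbar

/-- The sequence `T'' ⟶ T ⟶ T'` is a short exact sequence of triangulated categories:
`G` is fully faithful, `F ∘ G = 0`, and the functor induced by `F` on the Verdier
quotient of `T` by the essential image of `G` is an equivalence. -/
structure IsShortExact (G : T'' ⥤ T) (F : T ⥤ T') : Prop where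
  full : G.Full
  faithful : G.Faithful
  zero : ∀ X : T'', IsZero (F.obj (G.obj X))
  quotient_equiv :
    ∀ (S : ObjectProperty T) [S.IsTriangulated]
      (_ : ∀ X : T, S X ↔ ∃ A : T'', Nonempty (X ≅ G.obj A))
      (Fbar : S.trW.Localization ⥤ T') (_ : S.trW.Q ⋙ Fbar ≅ F),
      Fbar.IsEquivalence

end SES

end Paper

namespace CategoryTheory

section Adjunction

variable {C D : Type*} [Category C] [Category D] {F : C ⥤ D} {G : D ⥤ C}

lemma Adjunction.isZero_obj_left_iff_subsingleton [HasZeroMorphisms D] (adj : F ⊣ G) (X : C) :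
    IsZero (F.obj X) ↔ ∀ Y, Subsingleton (X ⟶ G.obj Y) := by
  refine ⟨fun h Y => ⟨fun f g => (adj.homEquiv X Y).symm.injective (h.eq_of_src _ _)⟩,
    fun h => ?_⟩
  rw [IsZero.iff_id_eq_zero]
  exact (adj.homEquiv X _).injective (Subsingleton.elim _ _)

lemma Adjunction.isZero_obj_right_iff_subsingleton [HasZeroMorphisms C] (adj : F ⊣ G) (Y : D) :
    IsZero (G.obj Y) ↔ ∀ X, Subsingleton (F.obj X ⟶ Y) := by
  refine ⟨fun h X => ⟨fun f g => (adj.homEquiv X Y).injective (h.eq_of_tgt _ _)⟩,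
    fun h => ?_⟩
  rw [IsZero.iff_id_eq_zero]
  exact (adj.homEquiv _ Y).symm.injective (Subsingleton.elim _ _)

lemma Adjunction.rightOrthogonal_essImage [HasZeroMorphisms C] [HasZeroMorphisms D]
    (adj : F ⊣ G) {Y : D} (hY : IsZero (G.obj Y)) : F.essImage.rightOrthogonal Y := by
  rintro Z f ⟨X, ⟨e⟩⟩
  have := (adj.isZero_obj_right_iff_subsingleton Y).1 hY X
  simpa using congrArg (e.inv ≫ ·) (Subsingleton.elim (e.hom ≫ f) 0)

lemma Adjunction.leftOrthogonal_essImage [HasZeroMorphisms C] [HasZeroMorphisms D]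
    (adj : F ⊣ G) {X : C} (hX : IsZero (F.obj X)) : G.essImage.leftOrthogonal X := by
  rintro Z f ⟨Y, ⟨e⟩⟩
  have := (adj.isZero_obj_left_iff_subsingleton X).1 hX Y
  simpa using congrArg (· ≫ e.hom) (Subsingleton.elim (f ≫ e.inv) 0)

end Adjunction

section Localization

variable {C D : Type*} [Category C] [Category D]

lemma Localization.isIso_counit_of_adjunction (W : MorphismProperty C) (L : C ⥤ D)
    [L.IsLocalization W] {R : D ⥤ C} (adj : L ⊣ R) : IsIso adj.counit := by
  -- `L η` descends along `L` to a transformation `μ`, and the triangle identities make it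
  -- inverse to the counit on objects of the form `L X`, which is enough.
  let μ : 𝟭 D ⟶ R ⋙ L :=
    Localization.liftNatTrans L W L (L ⋙ R ⋙ L) (𝟭 D) (R ⋙ L) (Functor.whiskerRight adj.unit L)
  have hμ (X : C) : μ.app (L.obj X) = L.map (adj.unit.app X) := by simp [μ]
  refine ⟨μ, Localization.natTrans_ext L W fun X => ?_, Localization.natTrans_ext L W fun X => ?_⟩
  · have := μ.naturality (adj.counit.app (L.obj X))
    dsimp at this ⊢
    rw [this, hμ, ← L.map_comp, adj.right_triangle_components]
    exact L.map_id _
  · simp [hμ]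

lemma Localization.isIso_unit_of_adjunction (W : MorphismProperty C) (L : C ⥤ D)
    [L.IsLocalization W] {F : D ⥤ C} (adj : F ⊣ L) : IsIso adj.unit := by
  have := Localization.isIso_counit_of_adjunction W.op L.op adj.op
  have (Y : D) : IsIso (adj.unit.app Y) :=
    have : IsIso (adj.unit.app Y).op := inferInstanceAs (IsIso (adj.op.counit.app (Opposite.op Y)))
    isIso_of_op _
  exact NatIso.isIso_of_isIso_app _

variable [HasZeroMorphisms C] {W : MorphismProperty C} (L : C ⥤ D) [L.IsLocalization W]

lemma MorphismProperty.isZero_of_isColocal_of_isZero_map {X : C} (hX : W.isColocal X)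
    (hLX : IsZero (L.obj X)) : IsZero X := by
  -- `Hom(X, -)` inverts `W`, so it cannot separate `𝟙 X` from `0`, which `L` identifies.
  have hinv : W.IsInvertedBy (coyoneda.obj (Opposite.op X)) := fun _ _ g hg =>
    (isIso_iff_bijective _).2 (hX g hg)
  have := (AreEqualizedByLocalization.mk (W := W) (f := 𝟙 X) (g := 0) L
    (hLX.eq_of_src _ _)).map_eq_of_isInvertedBy _ hinv
  rw [IsZero.iff_id_eq_zero]
  simpa using ConcreteCategory.congr_hom this (𝟙 X)

lemma MorphismProperty.isZero_of_isLocal_of_isZero_map {X : C} (hX : W.isLocal X)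
    (hLX : IsZero (L.obj X)) : IsZero X := by
  have hinv : W.op.IsInvertedBy (yoneda.obj X) := fun _ _ f hf =>
    (isIso_iff_bijective _).2 (hX f.unop hf)
  have := (AreEqualizedByLocalization.mk (W := W.op) (f := 𝟙 (Opposite.op X)) (g := 0) L.op
    (hLX.op.eq_of_src _ _)).map_eq_of_isInvertedBy _ hinv
  rw [IsZero.iff_id_eq_zero]
  simpa using ConcreteCategory.congr_hom this (𝟙 X)

end Localization

lemma ObjectProperty.exists_iso_comp_eq_of_isColocal {C : Type*} [Category C]
    {P : ObjectProperty C} {X Y Y' : C} {g : Y ⟶ X} {g' : Y' ⟶ X}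
    (hg : P.isColocal g) (hg' : P.isColocal g') (hY : P Y) (hY' : P Y') :
    ∃ e : Y ≅ Y', e.hom ≫ g' = g := by
  obtain ⟨φ, hφ : φ ≫ g' = g⟩ := (hg' _ hY).2 g
  have hφ' : P.isColocal φ := P.isColocal.of_postcomp φ g' hg' (hφ ▸ hg)
  have := (P.isColocal_iff_isIso φ hY hY').1 hφ'
  exact ⟨asIso φ, hφ⟩

section Pretriangulated

variable {A B C : Type*} [Category A] [Category B] [Category C]
  [HasZeroObject A] [HasShift A ℤ] [Preadditive A] [∀ n : ℤ, (shiftFunctor A n).Additive]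
  [Pretriangulated A]
  [HasZeroObject B] [HasShift B ℤ] [Preadditive B] [∀ n : ℤ, (shiftFunctor B n).Additive]
  [Pretriangulated B]
  [HasZeroObject C] [HasShift C ℤ] [Preadditive C] [∀ n : ℤ, (shiftFunctor C n).Additive]
  [Pretriangulated C]

lemma ObjectProperty.isColocal_mor₁_of_rightOrthogonal (P : ObjectProperty C)
    [P.IsStableUnderShift ℤ] (T : Triangle C) (hT : T ∈ distTriang C)
    (hT₃ : P.rightOrthogonal T.obj₃) : P.isColocal T.mor₁ := by
  intro Z hZ
  refine ⟨fun φ₁ φ₂ h => ?_, fun ρ => ?_⟩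
  · suffices ∀ φ : Z ⟶ T.obj₁, φ ≫ T.mor₁ = 0 → φ = 0 from
      sub_eq_zero.1 (this _ (by simpa [sub_eq_zero] using h))
    intro φ hφ
    obtain ⟨q, rfl⟩ := Triangle.coyoneda_exact₂ _ (inv_rot_of_distTriang _ hT) φ hφ
    have hq : q = 0 := P.rightOrthogonal.le_shift (-1) _ hT₃ q hZ
    rw [hq]
    exact zero_comp
  · obtain ⟨q, hq⟩ := Triangle.coyoneda_exact₂ _ hT ρ (hT₃ _ hZ)
    exact ⟨q, hq.symm⟩

lemma Adjunction.mem_essImage_left_of_isZero {L : A ⥤ C} {M : C ⥤ A} {N : C ⥤ B} (adj : L ⊣ M)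
    [L.Full] [L.Faithful] [M.CommShift ℤ] [M.IsTriangulated] [N.CommShift ℤ] [N.IsTriangulated]
    (hNL : ∀ X, IsZero (N.obj (L.obj X)))
    (hMN : ∀ K, IsZero (M.obj K) → IsZero (N.obj K) → IsZero K)
    {Y : C} (hY : IsZero (N.obj Y)) : L.essImage Y := by
  obtain ⟨K, g, h, hT⟩ := distinguished_cocone_triangle (adj.counit.app Y)
  have hMK : IsZero (M.obj K) :=
    Triangle.isZero₃_of_isIso₁ _ (M.map_distinguished _ hT)
      (inferInstanceAs (IsIso (M.map (adj.counit.app Y))))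
  have hNK : IsZero (N.obj K) :=
    Triangle.isZero₃_of_isZero₁₂ _ (N.map_distinguished _ hT) (hNL _) hY
  have := (Triangle.isZero₃_iff_isIso₁ _ hT).1 (hMN K hMK hNK)
  exact adj.isIso_counit_app_iff_mem_essImage.1 this

lemma Adjunction.mem_essImage_right_of_isZero {F : C ⥤ A} {L : A ⥤ C} {N : C ⥤ B} (adj : F ⊣ L)
    [L.Full] [L.Faithful] [F.CommShift ℤ] [F.IsTriangulated] [N.CommShift ℤ] [N.IsTriangulated]
    (hNL : ∀ X, IsZero (N.obj (L.obj X)))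
    (hFN : ∀ K, IsZero (F.obj K) → IsZero (N.obj K) → IsZero K)
    {Y : C} (hY : IsZero (N.obj Y)) : L.essImage Y := by
  obtain ⟨K, g, h, hT⟩ := distinguished_cocone_triangle₁ (adj.unit.app Y)
  have hFK : IsZero (F.obj K) :=
    Triangle.isZero₁_of_isIso₂ _ (F.map_distinguished _ hT)
      (inferInstanceAs (IsIso (F.map (adj.unit.app Y))))
  have hNK : IsZero (N.obj K) :=
    Triangle.isZero₁_of_isZero₂₃ _ (N.map_distinguished _ hT) hY (hNL _)
  have := (Triangle.isZero₁_iff_isIso₂ _ hT).1 (hFN K hFK hNK)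
  exact adj.isIso_unit_app_iff_mem_essImage.1 this

lemma Adjunction.exists_distinguished_counit_unit {L : A ⥤ C} {M : C ⥤ A} {N : C ⥤ B}
    {R : B ⥤ C} (adjLM : L ⊣ M) (adjNR : N ⊣ R) [L.Full] [L.Faithful] [L.CommShift ℤ]
    [L.IsTriangulated] [R.Full] [R.Faithful] [N.CommShift ℤ] [N.IsTriangulated]
    (hNL : ∀ X, IsZero (N.obj (L.obj X))) (hker : ∀ Y, IsZero (N.obj Y) → L.essImage Y) (X : C) :
    ∃ h : R.obj (N.obj X) ⟶ (L.obj (M.obj X))⟦(1 : ℤ)⟧,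
      Triangle.mk (adjLM.counit.app X) (adjNR.unit.app X) h ∈ distTriang C := by
  obtain ⟨Y, g, w, hT⟩ := distinguished_cocone_triangle₁ (adjNR.unit.app X)
  have hNY : IsZero (N.obj Y) :=
    Triangle.isZero₁_of_isIso₂ _ (N.map_distinguished _ hT)
      (inferInstanceAs (IsIso (N.map (adjNR.unit.app X))))
  have hR : L.essImage.rightOrthogonal (R.obj (N.obj X)) := by
    rintro Z f ⟨X', ⟨e⟩⟩
    have := (adjNR.isZero_obj_left_iff_subsingleton Z).1
      ((hNL X').of_iso (N.mapIso e.symm)) (N.obj X)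
    exact Subsingleton.elim _ _
  -- `g` and the counit both coreflect `X` onto the essential image of `L`.
  have hg : L.essImage.isColocal g := L.essImage.isColocal_mor₁_of_rightOrthogonal _ hT hR
  have hε : L.essImage.isColocal (adjLM.counit.app X) := by
    rw [← L.isoClosure_eq_essImage, ObjectProperty.isoClosure_isColocal]
    exact ObjectProperty.isColocal_adj_counit_app adjLM X
  obtain ⟨e, he⟩ := ObjectProperty.exists_iso_comp_eq_of_isColocal hε hg
    (L.obj_mem_essImage _) (hker Y hNY)
  refine ⟨w ≫ e.inv⟦(1 : ℤ)⟧', isomorphic_distinguished _ hT _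
    (Triangle.isoMk _ _ e (Iso.refl _) (Iso.refl _) ?_ ?_ ?_)⟩
  · exact (Category.comp_id _).trans he.symm
  · exact (Category.comp_id _).trans (Category.id_comp _).symm
  · change (w ≫ e.inv⟦(1 : ℤ)⟧') ≫ e.hom⟦(1 : ℤ)⟧' = 𝟙 _ ≫ w
    simp [← Functor.map_comp]

end Pretriangulated

end CategoryTheory

namespace Paper

section Recollement

variable {T' T T'' : Type*} [Category T'] [Category T''] [Category T] [HasZeroObject T]
  [HasShift T ℤ] [Preadditive T] [∀ n : ℤ, (shiftFunctor T n).Additive] [Pretriangulated T]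
  {iStar : T ⥤ T'} {iS : T' ⥤ T} {iShriek : T ⥤ T'}
  {jShriek : T'' ⥤ T} {jStar : T ⥤ T''} {jS : T'' ⥤ T}

def IsRecollement (a₁ : iStar ⊣ iS) (a₂ : iS ⊣ iShriek) (b₁ : jShriek ⊣ jStar)
    (b₂ : jStar ⊣ jS) : Prop :=
  iS.Full ∧ iS.Faithful ∧ jShriek.Full ∧ jShriek.Faithful ∧ jS.Full ∧ jS.Faithful ∧
  (∀ X : T', IsZero (jStar.obj (iS.obj X))) ∧
  (∀ X : T, ∃ h : jS.obj (jStar.obj X) ⟶ (iS.obj (iShriek.obj X))⟦(1 : ℤ)⟧,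
      Triangle.mk (a₂.counit.app X) (b₂.unit.app X) h ∈ distTriang T) ∧
  (∀ X : T, ∃ h : iS.obj (iStar.obj X) ⟶ (jShriek.obj (jStar.obj X))⟦(1 : ℤ)⟧,
      Triangle.mk (b₁.counit.app X) (a₁.unit.app X) h ∈ distTriang T)

variable [HasZeroObject T'] [HasShift T' ℤ] [Preadditive T']
  [∀ n : ℤ, (shiftFunctor T' n).Additive] [Pretriangulated T']
  [HasZeroObject T''] [HasShift T'' ℤ] [Preadditive T'']
  [∀ n : ℤ, (shiftFunctor T'' n).Additive] [Pretriangulated T'']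

lemma IsShortExact.isLocalization {G : T'' ⥤ T} {F : T ⥤ T'} [G.CommShift ℤ] [G.IsTriangulated]
    [F.CommShift ℤ] [F.IsTriangulated] (h : IsShortExact G F) :
    F.IsLocalization G.essImage.trW := by
  have := h.full
  have hinv : G.essImage.trW.IsInvertedBy F := by
    rintro X Y w ⟨Z, g, k, hT, A, ⟨e⟩⟩
    exact (Triangle.isZero₃_iff_isIso₁ _ (F.map_distinguished _ hT)).1
      ((h.zero A).of_iso (F.mapIso e.symm))
  have hS (X : T) : G.essImage X ↔ ∃ A, Nonempty (X ≅ G.obj A) :=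
    ⟨fun ⟨A, ⟨e⟩⟩ => ⟨A, ⟨e.symm⟩⟩, fun ⟨A, ⟨e⟩⟩ => ⟨A, ⟨e.symm⟩⟩⟩
  have := h.quotient_equiv G.essImage hS _ (Localization.fac F hinv G.essImage.trW.Q)
  exact Functor.IsLocalization.of_equivalence_target G.essImage.trW.Q _ F
    (Localization.lift F hinv G.essImage.trW.Q).asEquivalence (Localization.fac F hinv _)

variable [iStar.CommShift ℤ] [iStar.IsTriangulated] [iS.CommShift ℤ] [iS.IsTriangulated]
  [jShriek.CommShift ℤ] [jShriek.IsTriangulated] [jStar.CommShift ℤ] [jStar.IsTriangulated]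
  (a₁ : iStar ⊣ iS) (a₂ : iS ⊣ iShriek) (b₁ : jShriek ⊣ jStar) (b₂ : jStar ⊣ jS)

theorem isRecollement_of_mem_essImage [iS.Full] [iS.Faithful] [jShriek.Full] [jShriek.Faithful]
    (hzero : ∀ A, IsZero (jStar.obj (iS.obj A)))
    (hker : ∀ Y, IsZero (jStar.obj Y) → iS.essImage Y) : IsRecollement a₁ a₂ b₁ b₂ := by
  have hjS : jS.FullyFaithful :=
    (Adjunction.Triple.mk b₁ b₂).fullyFaithfulEquiv (.ofFullyFaithful jShriek)
  have := hjS.full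
  have := hjS.faithful
  have hzero' (B : T'') : IsZero (iStar.obj (jShriek.obj B)) :=
    (a₁.isZero_obj_left_iff_subsingleton _).2 fun A =>
      (b₁.isZero_obj_right_iff_subsingleton _).1 (hzero A) B
  have hker' (Y : T) (hY : IsZero (iStar.obj Y)) : jShriek.essImage Y := by
    refine b₁.mem_essImage_left_of_isZero hzero' (fun K hjK hiK => ?_) hY
    obtain ⟨A, ⟨e⟩⟩ := hker K hjK
    have hA : IsZero A := (hiK.of_iso (iStar.mapIso e)).of_iso (asIso (a₁.counit.app A)).symm
    exact (iS.map_isZero hA).of_iso e.symm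
  exact ⟨inferInstance, inferInstance, inferInstance, inferInstance, inferInstance, inferInstance,
    hzero, a₂.exists_distinguished_counit_unit b₂ hzero hker,
    b₁.exists_distinguished_counit_unit a₁ hzero' hker'⟩

theorem isRecollement_of_isShortExact_jShriek_iStar (h : IsShortExact jShriek iStar) :
    IsRecollement a₁ a₂ b₁ b₂ := by
  have := h.full
  have := h.faithful
  have := h.isLocalization
  have := Localization.isIso_counit_of_adjunction jShriek.essImage.trW iStar a₁
  have := a₁.fullyFaithfulROfIsIsoCounit.full
  have := a₁.fullyFaithfulROfIsIsoCounit.faithful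
  have hzero (A : T') : IsZero (jStar.obj (iS.obj A)) :=
    (b₁.isZero_obj_right_iff_subsingleton _).2 fun B =>
      (a₁.isZero_obj_left_iff_subsingleton _).1 (h.zero B) A
  refine isRecollement_of_mem_essImage a₁ a₂ b₁ b₂ hzero fun Y hY =>
    a₁.mem_essImage_right_of_isZero hzero (fun K hiK hjK => ?_) hY
  refine MorphismProperty.isZero_of_isLocal_of_isZero_map (W := jShriek.essImage.trW) iStar ?_ hiK
  rw [ObjectProperty.isLocal_trW]
  exact b₁.rightOrthogonal_essImage hjK

theorem isRecollement_of_isShortExact_iS_jStar [iShriek.CommShift ℤ] [iShriek.IsTriangulated]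
    (h : IsShortExact iS jStar) : IsRecollement a₁ a₂ b₁ b₂ := by
  have := h.full
  have := h.faithful
  have := h.isLocalization
  have := Localization.isIso_unit_of_adjunction iS.essImage.trW jStar b₁
  have := b₁.fullyFaithfulLOfIsIsoUnit.full
  have := b₁.fullyFaithfulLOfIsIsoUnit.faithful
  refine isRecollement_of_mem_essImage a₁ a₂ b₁ b₂ h.zero fun Y hY =>
    a₂.mem_essImage_left_of_isZero h.zero (fun K hiK hjK => ?_) hY
  refine MorphismProperty.isZero_of_isLocal_of_isZero_map (W := iS.essImage.trW) jStar ?_ hjK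
  rw [ObjectProperty.isLocal_trW]
  exact a₂.rightOrthogonal_essImage hiK

theorem isRecollement_of_isShortExact_jS_iShriek [iShriek.CommShift ℤ] [iShriek.IsTriangulated]
    [jS.CommShift ℤ] [jS.IsTriangulated] (h : IsShortExact jS iShriek) :
    IsRecollement a₁ a₂ b₁ b₂ := by
  have := h.full
  have := h.faithful
  have := h.isLocalization
  have := Localization.isIso_unit_of_adjunction jS.essImage.trW iShriek a₂
  have := a₂.fullyFaithfulLOfIsIsoUnit.full
  have := a₂.fullyFaithfulLOfIsIsoUnit.faithful
  have hjShriek : jShriek.FullyFaithful :=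
    (Adjunction.Triple.mk b₁ b₂).fullyFaithfulEquiv.symm (.ofFullyFaithful jS)
  have := hjShriek.full
  have := hjShriek.faithful
  have hzero (A : T') : IsZero (jStar.obj (iS.obj A)) :=
    (b₂.isZero_obj_left_iff_subsingleton _).2 fun B =>
      (a₂.isZero_obj_right_iff_subsingleton _).1 (h.zero B) A
  refine isRecollement_of_mem_essImage a₁ a₂ b₁ b₂ hzero fun Y hY =>
    a₂.mem_essImage_left_of_isZero hzero (fun K hiK hjK => ?_) hY
  refine MorphismProperty.isZero_of_isColocal_of_isZero_map (W := jS.essImage.trW) iShriek ?_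
    hiK
  rw [ObjectProperty.isColocal_trW]
  exact b₂.leftOrthogonal_essImage hjK

end Recollement

/-- Given six triangle functors `(i^*, i_*, i^!, j_!, j^*, j_*)` such
that `(i^*, i_*, i^!)` and `(j_!, j^*, j_*)` are adjoint triples, if any one of the three
rows (`j_!, i^*`), (`i_*, j^*`), (`j_*, i^!`) is a short exact sequence of triangulated
categories, then the diagram is a recollement: `i_*`, `j_!`, `j_*` are fully faithful,
`j^* ∘ i_* = 0`, and the two gluing triangles exist. -/
theorem statement5
    {T' T T'' : Type u}
    [Category.{v} T'] [HasZeroObject T'] [HasShift T' ℤ] [Preadditive T']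
    [∀ n : ℤ, (shiftFunctor T' n).Additive] [Pretriangulated T']
    [Category.{v} T] [HasZeroObject T] [HasShift T ℤ] [Preadditive T]
    [∀ n : ℤ, (shiftFunctor T n).Additive] [Pretriangulated T]
    [Category.{v} T''] [HasZeroObject T''] [HasShift T'' ℤ] [Preadditive T'']
    [∀ n : ℤ, (shiftFunctor T'' n).Additive] [Pretriangulated T'']
    (iStar : T ⥤ T') [iStar.CommShift ℤ] [iStar.IsTriangulated]
    (iS : T' ⥤ T) [iS.CommShift ℤ] [iS.IsTriangulated]
    (iShriek : T ⥤ T') [iShriek.CommShift ℤ] [iShriek.IsTriangulated]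
    (jShriek : T'' ⥤ T) [jShriek.CommShift ℤ] [jShriek.IsTriangulated]
    (jStar : T ⥤ T'') [jStar.CommShift ℤ] [jStar.IsTriangulated]
    (jS : T'' ⥤ T) [jS.CommShift ℤ] [jS.IsTriangulated]
    (a₁ : iStar ⊣ iS) (a₂ : iS ⊣ iShriek) (b₁ : jShriek ⊣ jStar) (b₂ : jStar ⊣ jS)
    (hrow : IsShortExact jShriek iStar ∨ IsShortExact iS jStar ∨ IsShortExact jS iShriek) :
    iS.Full ∧ iS.Faithful ∧ jShriek.Full ∧ jShriek.Faithful ∧ jS.Full ∧ jS.Faithful ∧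
    (∀ X : T', IsZero (jStar.obj (iS.obj X))) ∧
    (∀ X : T, ∃ h : jS.obj (jStar.obj X) ⟶ (iS.obj (iShriek.obj X))⟦(1 : ℤ)⟧,
        Triangle.mk (a₂.counit.app X) (b₂.unit.app X) h ∈ distTriang T) ∧
    (∀ X : T, ∃ h : iS.obj (iStar.obj X) ⟶ (jShriek.obj (jStar.obj X))⟦(1 : ℤ)⟧,
        Triangle.mk (b₁.counit.app X) (a₁.unit.app X) h ∈ distTriang T) := by
  rcases hrow with h | h | h
  · exact isRecollement_of_isShortExact_jShriek_iStar a₁ a₂ b₁ b₂ h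
  · exact isRecollement_of_isShortExact_iS_jStar a₁ a₂ b₁ b₂ h
  · exact isRecollement_of_isShortExact_jS_iShriek a₁ a₂ b₁ b₂ h

end Paper
end

section
/- Let T and T' be compactly generated triangulated categories and (F, G) an adjoint pair with F: T' → T and G: T → T'. Then the following are equivalent: (a) F sends compact objects to compact objects; (b) G preserves infinite direct sums; (c) G has a right adjoint. -/
/-!
If `F c` is compact for every compact `c`, then for compact generators `c`
`Hom(c, G(∐ Yᵢ)) = Hom(F c, ∐ Yᵢ) = ⨁ Hom(F c, Yᵢ) = ⨁ Hom(c, G Yᵢ) = Hom(c, ∐ G Yᵢ)`,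
so the comparison map `∐ G Yᵢ ⟶ G (∐ Yᵢ)` is an isomorphism, since the shifts of the generators
detect isomorphisms; read backwards, the same chain shows that `F` preserves compactness when `G`
preserves coproducts. Left adjoints preserve coproducts.

The remaining implication is Brown representability. Given `Y`, build `X₀ ⟶ X₁ ⟶ ⋯` with
`uₙ : G Xₙ ⟶ Y`, where `X₀` is a coproduct of generators hitting every map `G c ⟶ Y` and
`Xₙ₊₁` is the cone of `∐ c ⟶ Xₙ`, summed over all `w : c ⟶ Xₙ` with `G w ≫ uₙ = 0`.
On the homotopy colimit `L` (the cone of `1 - shift` on `∐ Xₙ`) the induced `G L ⟶ Y` makes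
`Hom(c, L) ⟶ Hom(G c, Y)` bijective for every generator `c`, because maps from compact objects to
`L` factor through a finite stage. By the five lemma this bijectivity passes to coproducts and
cones, and the same construction for `G = 𝟭` shows that every object is isomorphic to one built
from the generators by coproducts and cones.
-/

open CategoryTheory Limits Pretriangulated

universe w v u

namespace Paper

section Compact

variable {T : Type u} [Category.{v} T] [Preadditive T]

/-- An object `X` is compact if, for every set-indexed family with a coproduct, the
canonical map `⨁ᵢ Hom(X, Yᵢ) → Hom(X, ∐ᵢ Yᵢ)` is bijective. -/
def IsCompactObj (X : T) : Prop :=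
  ∀ (ι : Type v) [DecidableEq ι], ∀ (g : ι → T) (c : Cofan g) (_ : IsColimit c),
    Function.Bijective (DirectSum.toAddMonoid
      (fun i => AddMonoidHom.mk' (fun u : X ⟶ g i => u ≫ c.inj i)
        (fun _ _ => Preadditive.add_comp _ _ _ _ _ _)))

variable (T) in
/-- A triangulated category with small coproducts is compactly generated if there is a
set of compact objects such that any object receiving no nonzero maps from their shifts
is zero. -/
def IsCompactlyGenerated [HasShift T ℤ] : Prop :=
  ∃ (ι : Type v) (g : ι → T), (∀ i, IsCompactObj (g i)) ∧
    ∀ X : T, (∀ (i : ι) (n : ℤ) (f : g i ⟶ X⟦n⟧), f = 0) → IsZero X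

/-- `a` is a compact generator. -/
def IsCompactGenerator [HasShift T ℤ] (a : T) : Prop :=
  IsCompactObj a ∧ ∀ X : T, (∀ (n : ℤ) (f : a ⟶ X⟦n⟧), f = 0) → IsZero X

end Compact

section SumHom

variable {C : Type*} [Category C] [Preadditive C]

noncomputable abbrev sumCompHom {ι : Type*} [DecidableEq ι] (X : C) {Y : ι → C} {P : C}
    (inj : ∀ i, Y i ⟶ P) : (DirectSum ι fun i => X ⟶ Y i) →+ (X ⟶ P) :=
  DirectSum.toAddMonoid fun i => AddMonoidHom.mk' (fun u : X ⟶ Y i => u ≫ inj i)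
    (fun _ _ => Preadditive.add_comp _ _ _ _ _ _)

variable {ι : Type*} [DecidableEq ι]

@[simp]
lemma sumCompHom_of (X : C) {Y : ι → C} {P : C} (inj : ∀ i, Y i ⟶ P) (i : ι) (u : X ⟶ Y i) :
    sumCompHom X inj (DirectSum.of _ i u) = u ≫ inj i :=
  DirectSum.toAddMonoid_of _ _ _

lemma sumCompHom_comp (X : C) {Y : ι → C} {P Q : C} (inj : ∀ i, Y i ⟶ P) (ψ : P ⟶ Q)
    (x : DirectSum ι fun i => X ⟶ Y i) :
    sumCompHom X (fun i => inj i ≫ ψ) x = sumCompHom X inj x ≫ ψ := by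
  induction x using DirectSum.induction_on with
  | zero => simp
  | of i u => simp
  | add x y hx hy => simp [hx, hy, Preadditive.add_comp]

lemma bijective_sumCompHom_iff {D : Type*} [Category D] [Preadditive D] {Y : ι → C} {Y' : ι → D}
    {X P : C} {X' P' : D} (inj : ∀ i, Y i ⟶ P) (inj' : ∀ i, Y' i ⟶ P')
    (φ : ∀ i, (X ⟶ Y i) ≃+ (X' ⟶ Y' i)) (Φ : (X ⟶ P) ≃+ (X' ⟶ P'))
    (hφ : ∀ i (u : X ⟶ Y i), Φ (u ≫ inj i) = φ i u ≫ inj' i) :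
    Function.Bijective (sumCompHom X inj) ↔ Function.Bijective (sumCompHom X' inj') := by
  let Ψ : (DirectSum ι fun i => X ⟶ Y i) ≃+ DirectSum ι fun i => X' ⟶ Y' i :=
    DFinsupp.mapRange.addEquiv φ
  have hsq : Φ.toAddMonoidHom.comp (sumCompHom X inj) =
      (sumCompHom X' inj').comp Ψ.toAddMonoidHom := by
    refine DirectSum.addHom_ext fun i u => ?_
    have hΨ : Ψ (DirectSum.of _ i u) = DirectSum.of _ i (φ i u) :=
      DFinsupp.mapRange_single (hf := fun i => map_zero (φ i))
    simp [hΨ, hφ]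
  rw [← Φ.toEquiv.comp_bijective, ← Ψ.toEquiv.bijective_comp (sumCompHom X' inj')]
  exact iff_of_eq (congrArg (fun f : _ →+ _ => Function.Bijective f) hsq)

end SumHom

section CompactObj

variable {T : Type*} [Category.{v} T] [Preadditive T]

lemma IsCompactObj.bijective_sumCompHom_sigmaι {X : T} (hX : IsCompactObj X) {ι : Type v}
    [DecidableEq ι] (Y : ι → T) [HasCoproduct Y] :
    Function.Bijective (sumCompHom X (Sigma.ι Y)) :=
  hX ι Y _ (coproductIsCoproduct Y)

lemma IsCompactObj.obj_of_adjunction {D : Type*} [Category.{v} D] [Preadditive D]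
    {F : T ⥤ D} {G : D ⥤ T} (adj : F ⊣ G) [G.Additive]
    [∀ ι : Type v, PreservesColimitsOfShape (Discrete ι) G] {X : T} (hX : IsCompactObj X) :
    IsCompactObj (F.obj X) := by
  have := adj.left_adjoint_additive
  intro ι _ Y c hc
  have hGc : IsColimit (Cofan.mk (G.obj c.pt) fun i => G.map (c.inj i)) :=
    isColimitCofanMkObjOfIsColimit G Y c.inj hc
  exact (bijective_sumCompHom_iff _ _ (fun i => (adj.homAddEquiv X (Y i)).symm)
    (adj.homAddEquiv X c.pt).symm
    (fun i u => adj.homEquiv_naturality_right_symm u (c.inj i))).mp (hX ι _ _ hGc)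

variable [HasShift T ℤ] [∀ n : ℤ, (shiftFunctor T n).Additive]

noncomputable def shiftHomAddEquiv (X Y : T) {a b : ℤ} (h : a + b = 0) :
    (X⟦a⟧ ⟶ Y) ≃+ (X ⟶ Y⟦b⟧) :=
  letI : (shiftEquiv' T a b h).functor.Additive := inferInstanceAs (shiftFunctor T a).Additive
  (shiftEquiv' T a b h).toAdjunction.homAddEquiv X Y

lemma shiftHomAddEquiv_comp {X Y Y' : T} {a b : ℤ} (h : a + b = 0) (u : X⟦a⟧ ⟶ Y)
    (v : Y ⟶ Y') : shiftHomAddEquiv X Y' h (u ≫ v) = shiftHomAddEquiv X Y h u ≫ v⟦b⟧' :=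
  (shiftEquiv' T a b h).toAdjunction.homEquiv_naturality_right u v

lemma IsCompactObj.shift {X : T} (hX : IsCompactObj X) (a : ℤ) : IsCompactObj (X⟦a⟧) := by
  intro ι _ Y c hc
  have hc' : IsColimit (Cofan.mk (c.pt⟦-a⟧) fun i => (c.inj i)⟦-a⟧') :=
    isColimitCofanMkObjOfIsColimit (shiftFunctor T (-a)) Y c.inj hc
  exact (bijective_sumCompHom_iff _ _ (fun i => shiftHomAddEquiv X (Y i) (add_neg_cancel a))
    (shiftHomAddEquiv X c.pt (add_neg_cancel a))
    (fun i u => shiftHomAddEquiv_comp _ u (c.inj i))).mpr (hX ι _ _ hc')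

end CompactObj

section Generating

variable {T : Type*} [Category.{v} T]

def IsShiftStable [HasShift T ℤ] {κ : Type*} (c : κ → T) : Prop :=
  ∀ (k : κ) (n : ℤ), ∃ k', Nonempty ((c k)⟦n⟧ ≅ c k')

structure IsGeneratingFamily [Preadditive T] [HasShift T ℤ] {κ : Type*} (c : κ → T) : Prop where
  isShiftStable : IsShiftStable c
  isZero_of_hom_eq_zero (X : T) : (∀ k (f : c k ⟶ X), f = 0) → IsZero X

variable [Preadditive T] [HasShift T ℤ] [∀ n : ℤ, (shiftFunctor T n).Additive]

lemma IsCompactlyGenerated.exists_isGeneratingFamily (h : IsCompactlyGenerated T) :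
    ∃ (κ : Type v) (c : κ → T), (∀ k, IsCompactObj (c k)) ∧ IsGeneratingFamily c := by
  obtain ⟨ι, g, hg, hgen⟩ := h
  refine ⟨ι × ℤ, fun p => (g p.1)⟦p.2⟧, fun p => (hg p.1).shift p.2,
    ⟨fun p n => ?_, fun X hX => ?_⟩⟩
  · exact ⟨(p.1, p.2 + n), ⟨((shiftFunctorAdd' T p.2 n _ rfl).app (g p.1)).symm⟩⟩
  · refine hgen X fun i n f => ?_
    let E := shiftHomAddEquiv (g i) X (neg_add_cancel n)
    rw [← E.apply_symm_apply f, hX (i, -n) (E.symm f), map_zero]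

variable {κ : Type*} {c : κ → T}

lemma IsShiftStable.bijective_comp_shift (hc : IsShiftStable c) {A B : T} (d : A ⟶ B)
    (hd : ∀ k, Function.Bijective fun f : c k ⟶ A => f ≫ d) (k : κ) (n : ℤ) :
    Function.Bijective fun f : c k ⟶ A⟦n⟧ => f ≫ d⟦n⟧' := by
  obtain ⟨k', ⟨e⟩⟩ := hc k (-n)
  let E (Z : T) : (c k' ⟶ Z) ≃ (c k ⟶ Z⟦n⟧) :=
    (e.symm.homCongr (Iso.refl Z)).trans (shiftHomAddEquiv (c k) Z (neg_add_cancel n)).toEquiv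
  have hsq : (fun f : c k ⟶ A⟦n⟧ => f ≫ d⟦n⟧') ∘ E A = E B ∘ fun f => f ≫ d := by
    funext f
    simp [E, ← shiftHomAddEquiv_comp]
  rw [← (E A).bijective_comp, hsq]
  exact (E B).bijective.comp (hd k')

variable [HasZeroObject T] [Pretriangulated T]

lemma IsGeneratingFamily.isIso_of_bijective (hc : IsGeneratingFamily c) {A B : T} (d : A ⟶ B)
    (hd : ∀ k, Function.Bijective fun f : c k ⟶ A => f ≫ d) : IsIso d := by
  obtain ⟨C, q, δ, hdist⟩ := distinguished_cocone_triangle d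
  refine (Triangle.isZero₃_iff_isIso₁ _ hdist).1 (hc.isZero_of_hom_eq_zero C fun k f => ?_)
  have hδd : δ ≫ d⟦1⟧' = 0 := comp_distTriang_mor_zero₃₁ _ hdist
  have hdq : d ≫ q = 0 := comp_distTriang_mor_zero₁₂ _ hdist
  have hfδ : f ≫ δ = 0 :=
    (hc.isShiftStable.bijective_comp_shift d hd k 1).injective <| by simp [hδd]
  obtain ⟨w, hw⟩ : ∃ w : c k ⟶ B, f = w ≫ q := Triangle.coyoneda_exact₃ _ hdist f hfδ
  obtain ⟨w', hw'⟩ := (hd k).surjective w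
  rw [hw, ← hw', Category.assoc, hdq, comp_zero]

end Generating

section PreservesCoproducts

variable {C D : Type*} [Category.{v} C] [Category.{v} D] [HasZeroObject C] [HasShift C ℤ]
  [Preadditive C] [∀ n : ℤ, (shiftFunctor C n).Additive] [Pretriangulated C] [HasCoproducts.{v} C]
  [Preadditive D] [HasCoproducts.{v} D]

lemma preservesColimitsOfShape_discrete_of_isCompactObj_obj {F : C ⥤ D} {G : D ⥤ C}
    (adj : F ⊣ G) [G.Additive] {κ : Type*} {c : κ → C} (hcpt : ∀ k, IsCompactObj (c k))
    (hc : IsGeneratingFamily c) (hF : ∀ k, IsCompactObj (F.obj (c k))) (ι : Type v) :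
    PreservesColimitsOfShape (Discrete ι) G := by
  classical
  have := adj.left_adjoint_additive
  suffices ∀ Y : ι → D, PreservesColimit (Discrete.functor Y) G from
    preservesColimitsOfShape_of_discrete G
  intro Y
  have : IsIso (sigmaComparison G Y) := hc.isIso_of_bijective _ fun k => by
    have hGY : Function.Bijective (sumCompHom (c k) fun i => G.map (Sigma.ι Y i)) :=
      (bijective_sumCompHom_iff _ _ (fun i => adj.homAddEquiv (c k) (Y i))
        (adj.homAddEquiv (c k) (∐ Y)) (fun i u => adj.homEquiv_naturality_right u _)).mp
        ((hF k).bijective_sumCompHom_sigmaι Y)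
    have hsq : (fun f => f ≫ sigmaComparison G Y) ∘
        sumCompHom (c k) (Sigma.ι fun i => G.obj (Y i)) =
          sumCompHom (c k) fun i => G.map (Sigma.ι Y i) := by
      funext x
      simp [← sumCompHom_comp]
    rw [← Function.Bijective.of_comp_iff _ ((hcpt k).bijective_sumCompHom_sigmaι _), hsq]
    exact hGY
  exact PreservesCoproduct.of_iso_comparison G Y

end PreservesCoproducts

section SuccShift

open DirectSum

variable {A : ULift.{v} ℕ → Type*} [∀ n, AddCommGroup (A n)] (f : ∀ n : ℕ, A ⟨n⟩ →+ A ⟨n + 1⟩)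

noncomputable def succShift : (⨁ n, A n) →+ ⨁ n, A n :=
  toAddMonoid fun n => (of A ⟨n.down + 1⟩).comp (f n.down)

@[simp]
lemma succShift_of (n : ℕ) (a : A ⟨n⟩) : succShift f (of A ⟨n⟩ a) = of A ⟨n + 1⟩ (f n a) :=
  toAddMonoid_of _ _ _

lemma succShift_apply_zero (x : ⨁ n, A n) : succShift f x ⟨0⟩ = 0 := by
  induction x using DirectSum.induction_on with
  | zero => simp
  | of n a =>
    obtain ⟨n⟩ := n
    rw [succShift_of]
    exact of_eq_of_ne _ _ _ (by simp)
  | add x y hx hy => rw [map_add, DirectSum.add_apply, hx, hy, add_zero]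

lemma succShift_apply_succ (x : ⨁ n, A n) (n : ℕ) : succShift f x ⟨n + 1⟩ = f n (x ⟨n⟩) := by
  induction x using DirectSum.induction_on with
  | zero => simp
  | of m a =>
    obtain ⟨m⟩ := m
    rw [succShift_of]
    by_cases hm : m = n
    · subst hm
      rw [of_eq_same, of_eq_same]
    · have hne : (⟨n⟩ : ULift.{v} ℕ) ≠ ⟨m⟩ := by simpa using Ne.symm hm
      have hne' : (⟨n + 1⟩ : ULift.{v} ℕ) ≠ ⟨m + 1⟩ := by simpa using Ne.symm hm
      rw [of_eq_of_ne _ _ _ hne', of_eq_of_ne _ _ _ hne, map_zero]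
  | add x y hx hy => rw [map_add, DirectSum.add_apply, DirectSum.add_apply, hx, hy, map_add]

lemma eq_zero_of_succShift_eq {x : ⨁ n, A n} (hx : succShift f x = x) : x = 0 := by
  have h : ∀ n : ℕ, x ⟨n⟩ = 0 := by
    intro n
    induction n with
    | zero => rw [← hx, succShift_apply_zero]
    | succ n ih => rw [← hx, succShift_apply_succ, ih, map_zero]
  ext ⟨n⟩
  exact h n

end SuccShift

section Telescope

variable {T : Type*} [Category.{v} T] [HasCoproducts.{v} T] (X : ℕ ⥤ T)

noncomputable abbrev telescope : T := ∐ fun n : ULift.{v} ℕ => X.obj n.down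

noncomputable abbrev telescopeι (n : ℕ) : X.obj n ⟶ telescope X :=
  Sigma.ι (fun n : ULift.{v} ℕ => X.obj n.down) ⟨n⟩

noncomputable def telescopeShift : telescope X ⟶ telescope X :=
  Sigma.desc fun n => X.map (homOfLE n.down.le_succ) ≫ telescopeι X (n.down + 1)

lemma telescopeι_telescopeShift (n : ℕ) :
    telescopeι X n ≫ telescopeShift X = X.map (homOfLE n.le_succ) ≫ telescopeι X (n + 1) :=
  Sigma.ι_desc _ _

variable {X} [Preadditive T]

lemma map_comp_telescopeι_comp {L : T} {π : telescope X ⟶ L}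
    (hπ : (𝟙 _ - telescopeShift X) ≫ π = 0) {m n : ℕ} (h : m ≤ n) :
    X.map (homOfLE h) ≫ telescopeι X n ≫ π = telescopeι X m ≫ π := by
  induction n, h using Nat.le_induction with
  | base => simp
  | succ n hmn ih =>
    have hstep : telescopeι X n ≫ (𝟙 _ - telescopeShift X) ≫ π = 0 := by rw [hπ, comp_zero]
    rw [Preadditive.sub_comp, Category.id_comp, Preadditive.comp_sub, sub_eq_zero,
      ← Category.assoc, telescopeι_telescopeShift, Category.assoc] at hstep
    rw [← homOfLE_comp hmn n.le_succ, X.map_comp, Category.assoc, ← hstep, ih]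

lemma IsCompactObj.injective_comp_one_sub_telescopeShift {Z : T} (hZ : IsCompactObj Z) :
    Function.Injective fun w : Z ⟶ telescope X => w ≫ (𝟙 _ - telescopeShift X) := by
  let e := sumCompHom Z (Sigma.ι fun n : ULift.{v} ℕ => X.obj n.down)
  have he : Function.Bijective e := hZ.bijective_sumCompHom_sigmaι _
  let σ := succShift (A := fun n : ULift.{v} ℕ => Z ⟶ X.obj n.down)
    fun n => Preadditive.rightComp Z (X.map (homOfLE n.le_succ))
  have hσ : ∀ x, e (σ x) = e x ≫ telescopeShift X := by
    intro x
    induction x using DirectSum.induction_on with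
    | zero => simp
    | of n w =>
      obtain ⟨n⟩ := n
      simp [σ, e, Preadditive.rightComp, telescopeι_telescopeShift]
    | add x y hx hy => simp only [map_add, hx, hy, Preadditive.add_comp]
  refine (injective_iff_map_eq_zero (Preadditive.rightComp Z (𝟙 _ - telescopeShift X))).2
    fun w hw => ?_
  obtain ⟨x, rfl⟩ := he.surjective w
  have hx : σ x = x := he.injective <| by
    rw [hσ, ← sub_eq_zero, ← neg_sub, neg_eq_zero]
    simpa [Preadditive.rightComp, Preadditive.comp_sub] using hw
  rw [eq_zero_of_succShift_eq _ hx, map_zero]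

variable [HasZeroObject T] [HasShift T ℤ] [∀ n : ℤ, (shiftFunctor T n).Additive]
  [Pretriangulated T]

lemma exists_eq_comp_telescopeι_comp {L : T} {π : telescope X ⟶ L} {δ : L ⟶ (telescope X)⟦1⟧}
    (hdist : Triangle.mk (𝟙 _ - telescopeShift X) π δ ∈ distTriang T) {Z : T}
    (hZ : IsCompactObj Z) (f : Z ⟶ L) :
    ∃ (n : ℕ) (w : Z ⟶ X.obj n), f = w ≫ telescopeι X n ≫ π := by
  have hπ : (𝟙 _ - telescopeShift X) ≫ π = 0 := comp_distTriang_mor_zero₁₂ _ hdist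
  have hδ : δ ≫ (𝟙 _ - telescopeShift X)⟦1⟧' = 0 := comp_distTriang_mor_zero₃₁ _ hdist
  have hfδ : f ≫ δ = 0 := by
    let E := shiftHomAddEquiv Z (telescope X) (neg_add_cancel (1 : ℤ))
    obtain ⟨y, hy⟩ := E.surjective (f ≫ δ)
    have hy0 : y ≫ (𝟙 _ - telescopeShift X) = 0 := E.injective <| by
      rw [shiftHomAddEquiv_comp, hy, Category.assoc, hδ, comp_zero, map_zero]
    rw [← hy, (hZ.shift (-1)).injective_comp_one_sub_telescopeShift (hy0.trans (zero_comp).symm),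
      map_zero]
  obtain ⟨w, rfl⟩ : ∃ w, f = w ≫ π := Triangle.coyoneda_exact₃ _ hdist f hfδ
  obtain ⟨x, rfl⟩ := (hZ.bijective_sumCompHom_sigmaι _).surjective w
  clear hfδ
  induction x using DirectSum.induction_on with
  | zero => exact ⟨0, 0, by simp⟩
  | of n w =>
    obtain ⟨n⟩ := n
    exact ⟨n, w, by simp⟩
  | add x y hx hy =>
    obtain ⟨m, u, hu⟩ := hx
    obtain ⟨n, v, hv⟩ := hy
    refine ⟨max m n, u ≫ X.map (homOfLE (le_max_left m n)) + v ≫ X.map (homOfLE (le_max_right m n)),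
      ?_⟩
    simp only [map_add, Preadditive.add_comp, Category.assoc, map_comp_telescopeι_comp hπ, hu, hv]

end Telescope

lemma Cofan.IsColimit.bijective_inj_comp {C : Type*} [Category C] {ι : Type*} {f : ι → C}
    {d : Cofan f} (hd : IsColimit d) (Z : C) :
    Function.Bijective fun v : d.pt ⟶ Z => fun i => d.inj i ≫ v :=
  ⟨fun _ _ h => Cofan.IsColimit.hom_ext hd _ _ (congrFun h),
    fun p => ⟨Cofan.IsColimit.desc hd p, funext (Cofan.IsColimit.fac hd p)⟩⟩

section RepresentsAt

variable {T D : Type*} [Category T] [Category D] (G : T ⥤ D) {R : T} {Y : D}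

def RepresentsAt (u : G.obj R ⟶ Y) (Z : T) : Prop :=
  Function.Bijective fun f : Z ⟶ R => G.map f ≫ u

variable {G} {u : G.obj R ⟶ Y}

lemma RepresentsAt.of_iso {Z Z' : T} (e : Z ≅ Z') (h : RepresentsAt G u Z') :
    RepresentsAt G u Z := by
  have hsq : (fun f : Z ⟶ R => G.map f ≫ u) =
      ((G.mapIso e).homCongr (Iso.refl Y)).symm ∘ (fun f : Z' ⟶ R => G.map f ≫ u) ∘
        e.homCongr (Iso.refl R) := by
    funext f
    simp
  unfold RepresentsAt
  rw [hsq, Equiv.comp_bijective, Equiv.bijective_comp]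
  exact h

lemma RepresentsAt.of_isColimit {ι : Type*} [PreservesColimitsOfShape (Discrete ι) G]
    {f : ι → T} {d : Cofan f} (hd : IsColimit d) (h : ∀ i, RepresentsAt G u (f i)) :
    RepresentsAt G u d.pt := by
  have hGd : IsColimit (Cofan.mk (G.obj d.pt) fun i => G.map (d.inj i)) :=
    isColimitCofanMkObjOfIsColimit G f d.inj hd
  have hsq : (fun v : G.obj d.pt ⟶ Y => fun i => G.map (d.inj i) ≫ v) ∘
      (fun v : d.pt ⟶ R => G.map v ≫ u) =
      Pi.map (fun i (x : f i ⟶ R) => G.map x ≫ u) ∘ fun v : d.pt ⟶ R => fun i => d.inj i ≫ v := by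
    funext v i
    simp
  have hcomp := (Function.Bijective.piMap h).comp (Cofan.IsColimit.bijective_inj_comp hd R)
  rw [← hsq] at hcomp
  exact ((Cofan.IsColimit.bijective_inj_comp hGd Y).of_comp_iff' _).1 hcomp

end RepresentsAt

section DistTriang

variable {T D : Type*} [Category T] [Category D] [Preadditive T] [Preadditive D]
  {G : T ⥤ D} {R : T} {Y : D} {u : G.obj R ⟶ Y}

lemma injective_map_comp_of_map_comp_eq_zero [G.Additive] {Z : T}
    (h : ∀ f : Z ⟶ R, G.map f ≫ u = 0 → f = 0) :
    Function.Injective fun f : Z ⟶ R => G.map f ≫ u := fun f g hfg =>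
  sub_eq_zero.1 (h _ (by simpa [Functor.map_sub, Preadditive.sub_comp, sub_eq_zero] using hfg))

variable [HasZeroObject T] [HasShift T ℤ] [∀ n : ℤ, (shiftFunctor T n).Additive]
  [Pretriangulated T] [HasZeroObject D] [HasShift D ℤ] [∀ n : ℤ, (shiftFunctor D n).Additive]
  [Pretriangulated D] [G.CommShift ℤ] [G.IsTriangulated] {Tr : Triangle T}

lemma injective_map_comp_of_distTriang (hTr : Tr ∈ distTriang T)
    (h₂ : Function.Injective fun f : Tr.obj₂ ⟶ R => G.map f ≫ u)
    (h₁' : Function.Injective fun f : Tr.obj₁⟦(1 : ℤ)⟧ ⟶ R => G.map f ≫ u)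
    (h₂' : Function.Surjective fun f : Tr.obj₂⟦(1 : ℤ)⟧ ⟶ R => G.map f ≫ u) :
    Function.Injective fun f : Tr.obj₃ ⟶ R => G.map f ≫ u := by
  refine injective_map_comp_of_map_comp_eq_zero fun x hx => ?_
  have hx₂ : Tr.mor₂ ≫ x = 0 := h₂ (by simp [hx])
  obtain ⟨a, rfl⟩ : ∃ a : Tr.obj₁⟦(1 : ℤ)⟧ ⟶ R, x = Tr.mor₃ ≫ a :=
    Triangle.yoneda_exact₂ _ (rot_of_distTriang _ hTr) x hx₂
  obtain ⟨w, hw⟩ : ∃ w, G.map a ≫ u = G.map (-Tr.mor₁⟦(1 : ℤ)⟧') ≫ w :=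
    Triangle.yoneda_exact₂ _
      (G.map_distinguished _ (rot_of_distTriang _ (rot_of_distTriang _ hTr))) (G.map a ≫ u)
      (show G.map Tr.mor₃ ≫ G.map a ≫ u = 0 by rwa [← G.map_comp_assoc])
  obtain ⟨b, rfl⟩ := h₂' w
  have ha : a = -(Tr.mor₁⟦(1 : ℤ)⟧' ≫ b) := h₁' (by simpa using hw)
  rw [ha, Preadditive.comp_neg, ← Category.assoc,
    comp_distTriang_mor_zero₃₁ _ hTr, zero_comp, neg_zero]

lemma surjective_map_comp_of_distTriang (hTr : Tr ∈ distTriang T)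
    (h₁ : Function.Injective fun f : Tr.obj₁ ⟶ R => G.map f ≫ u)
    (h₂ : Function.Surjective fun f : Tr.obj₂ ⟶ R => G.map f ≫ u)
    (h₁' : Function.Surjective fun f : Tr.obj₁⟦(1 : ℤ)⟧ ⟶ R => G.map f ≫ u) :
    Function.Surjective fun f : Tr.obj₃ ⟶ R => G.map f ≫ u := by
  intro y
  obtain ⟨b, hb⟩ := h₂ (G.map Tr.mor₂ ≫ y)
  have hb₁ : Tr.mor₁ ≫ b = 0 := h₁ <| by
    simp only at hb
    simp [hb, ← Functor.map_comp_assoc, comp_distTriang_mor_zero₁₂ _ hTr]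
  obtain ⟨c, rfl⟩ := Triangle.yoneda_exact₂ _ hTr b hb₁
  obtain ⟨w, hw⟩ : ∃ w, y - G.map c ≫ u = G.map Tr.mor₃ ≫ w :=
    Triangle.yoneda_exact₂ _ (G.map_distinguished _ (rot_of_distTriang _ hTr)) (y - G.map c ≫ u)
      (show G.map Tr.mor₂ ≫ (y - G.map c ≫ u) = 0 by
        simpa [Preadditive.comp_sub, sub_eq_zero] using hb.symm)
  obtain ⟨a, rfl⟩ := h₁' w
  refine ⟨c + Tr.mor₃ ≫ a, ?_⟩
  simp only at hw ⊢
  rw [Functor.map_add, Preadditive.add_comp, Functor.map_comp, Category.assoc, ← hw]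
  abel

end DistTriang

section Brown

variable {T D : Type*} [Category.{v} T] [Category.{v} D] [HasZeroObject T] [HasShift T ℤ]
  [Preadditive T] [∀ n : ℤ, (shiftFunctor T n).Additive] [Pretriangulated T] [HasCoproducts.{v} T]
  [Preadditive D] {κ : Type v}

inductive ConeCoproductClosure (c : κ → T) : T → Prop
  | of (k : κ) : ConeCoproductClosure c (c k)
  | sigma {ι : Type v} (f : ι → T) :
      (∀ i, ConeCoproductClosure c (f i)) → ConeCoproductClosure c (∐ f)
  | of_distTriang (Tr : Triangle T) : Tr ∈ distTriang T → ConeCoproductClosure c Tr.obj₁ →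
      ConeCoproductClosure c Tr.obj₂ → ConeCoproductClosure c Tr.obj₃

structure KillingTower (G : T ⥤ D) (c : κ → T) (Y : D) where
  X : ℕ ⥤ T
  hom (n : ℕ) : G.obj (X.obj n) ⟶ Y
  map_comp_hom (n : ℕ) : G.map (X.map (homOfLE n.le_succ)) ≫ hom (n + 1) = hom n
  surjective (k : κ) : Function.Surjective fun w : c k ⟶ X.obj 0 => G.map w ≫ hom 0
  comp_map_eq_zero (n : ℕ) (k : κ) (w : c k ⟶ X.obj n) :
    G.map w ≫ hom n = 0 → w ≫ X.map (homOfLE n.le_succ) = 0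
  closure (n : ℕ) : ConeCoproductClosure c (X.obj n)

variable [HasZeroObject D] [HasShift D ℤ] [∀ n : ℤ, (shiftFunctor D n).Additive]
  [Pretriangulated D] {G : T ⥤ D} [G.CommShift ℤ] [G.IsTriangulated]
  [∀ ι : Type v, PreservesColimitsOfShape (Discrete ι) G] {c : κ → T} {Y : D}

/-- All shifts are carried through the induction because the five lemma for a cone involves the
shifted vertices `Tr.obj₁⟦1⟧` and `Tr.obj₂⟦1⟧`. -/
lemma ConeCoproductClosure.representsAt_shift (hc : IsShiftStable c) {R : T} {u : G.obj R ⟶ Y}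
    (hu : ∀ k, RepresentsAt G u (c k)) {Z : T} (hZ : ConeCoproductClosure c Z) (m : ℤ) :
    RepresentsAt G u (Z⟦m⟧) := by
  induction hZ generalizing m with
  | of k =>
    obtain ⟨k', ⟨e⟩⟩ := hc k m
    exact (hu k').of_iso e
  | sigma f _ ih =>
    exact RepresentsAt.of_isColimit
      (isColimitCofanMkObjOfIsColimit (shiftFunctor T m) f _ (coproductIsCoproduct f))
      fun i => ih i m
  | of_distTriang Tr hTr _ _ ih₁ ih₂ =>
    have hTrm := Triangle.shift_distinguished _ hTr m
    have h₁' := (ih₁ (m + 1)).of_iso ((shiftFunctorAdd' T m 1 (m + 1) rfl).app Tr.obj₁).symm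
    have h₂' := (ih₂ (m + 1)).of_iso ((shiftFunctorAdd' T m 1 (m + 1) rfl).app Tr.obj₂).symm
    exact ⟨injective_map_comp_of_distTriang hTrm (ih₂ m).1 h₁'.1 h₂'.2,
      surjective_map_comp_of_distTriang hTrm (ih₁ m).1 (ih₂ m).2 h₁'.2⟩

variable (G c) in
lemma exists_killing_step (X : T) (u : G.obj X ⟶ Y) :
    ∃ (X' : T) (e : X ⟶ X') (u' : G.obj X' ⟶ Y), G.map e ≫ u' = u ∧
      (∀ k (w : c k ⟶ X), G.map w ≫ u = 0 → w ≫ e = 0) ∧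
      (ConeCoproductClosure c X → ConeCoproductClosure c X') := by
  let I := Σ k, {w : c k ⟶ X // G.map w ≫ u = 0}
  let s : ∐ (fun t : I => c t.1) ⟶ X := Sigma.desc fun t => t.2.1
  obtain ⟨X', e, δ, hdist⟩ := distinguished_cocone_triangle s
  have hs : G.map s ≫ u = 0 :=
    Cofan.IsColimit.hom_ext (isColimitOfHasCoproductOfPreservesColimit G _) _ _ fun t => by
      simp [s, ← G.map_comp_assoc, t.2.2]
  obtain ⟨u', hu'⟩ := Triangle.yoneda_exact₂ _ (G.map_distinguished _ hdist) u hs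
  refine ⟨X', e, u', hu'.symm, fun k w hw => ?_,
    fun hX => .of_distTriang _ hdist (.sigma _ fun t => .of t.1) hX⟩
  have hse : s ≫ e = 0 := comp_distTriang_mor_zero₁₂ _ hdist
  calc w ≫ e = Sigma.ι _ (⟨k, w, hw⟩ : I) ≫ s ≫ e := by simp [s]
    _ = 0 := by rw [hse, comp_zero]

variable (G c Y) in
lemma nonempty_killingTower : Nonempty (KillingTower G c Y) := by
  choose X' e u' hu hker hclosure using exists_killing_step G c (Y := Y)
  let I := Σ k, (G.obj (c k) ⟶ Y)
  have hG := isColimitOfHasCoproductOfPreservesColimit G fun t : I => c t.1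
  let seq (n : ℕ) : Σ X : T, (G.obj X ⟶ Y) :=
    Nat.rec ⟨∐ fun t : I => c t.1, Cofan.IsColimit.desc hG fun t => t.2⟩
      (fun _ p => ⟨X' p.1 p.2, u' p.1 p.2⟩) n
  refine ⟨{
    X := Functor.ofSequence fun n => e (seq n).1 (seq n).2
    hom n := (seq n).2
    map_comp_hom n := by rw [Functor.ofSequence_map_homOfLE_succ]; exact hu _ _
    surjective k h := ⟨Sigma.ι (fun t : I => c t.1) ⟨k, h⟩, Cofan.IsColimit.fac hG _ _⟩
    comp_map_eq_zero n k w hw := by rw [Functor.ofSequence_map_homOfLE_succ]; exact hker _ _ k w hw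
    closure n := ?_ }⟩
  induction n with
  | zero => exact .sigma _ fun t => .of t.1
  | succ n ih => exact hclosure _ _ ih

theorem KillingTower.exists_representsAt (B : KillingTower G c Y)
    (hcpt : ∀ k, IsCompactObj (c k)) :
    ∃ (L : T) (u : G.obj L ⟶ Y), ConeCoproductClosure c L ∧ ∀ k, RepresentsAt G u (c k) := by
  obtain ⟨L, π, δ, hdist⟩ := distinguished_cocone_triangle (𝟙 _ - telescopeShift B.X)
  have hπ : (𝟙 _ - telescopeShift B.X) ≫ π = 0 := comp_distTriang_mor_zero₁₂ _ hdist
  have hGP := isColimitOfHasCoproductOfPreservesColimit G fun n : ULift.{v} ℕ => B.X.obj n.down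
  let U : G.obj (telescope B.X) ⟶ Y := Cofan.IsColimit.desc hGP fun n => B.hom n.down
  have hU (n : ℕ) : G.map (telescopeι B.X n) ≫ U = B.hom n := Cofan.IsColimit.fac hGP _ ⟨n⟩
  have hUs : G.map (𝟙 _ - telescopeShift B.X) ≫ U = 0 :=
    Cofan.IsColimit.hom_ext hGP _ _ fun ⟨n⟩ => by
      change G.map (telescopeι B.X n) ≫ _ = _
      rw [← G.map_comp_assoc, Preadditive.comp_sub, Category.comp_id, telescopeι_telescopeShift,
        G.map_sub, Preadditive.sub_comp, hU, G.map_comp, Category.assoc, hU,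
        B.map_comp_hom, sub_self, comp_zero]
  obtain ⟨uL, huL⟩ : ∃ uL, U = G.map π ≫ uL :=
    Triangle.yoneda_exact₂ _ (G.map_distinguished _ hdist) U hUs
  have hα (n : ℕ) : G.map (telescopeι B.X n ≫ π) ≫ uL = B.hom n := by
    rw [G.map_comp, Category.assoc, ← huL, hU]
  have hP : ConeCoproductClosure c (telescope B.X) := .sigma _ fun n => B.closure n.down
  refine ⟨L, uL, .of_distTriang _ hdist hP hP, fun k => ⟨?_, fun h => ?_⟩⟩
  · refine injective_map_comp_of_map_comp_eq_zero fun f hf => ?_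
    obtain ⟨n, w, rfl⟩ := exists_eq_comp_telescopeι_comp hdist (hcpt k) f
    have hw := B.comp_map_eq_zero n k w (by rwa [G.map_comp_assoc, hα] at hf)
    rw [← map_comp_telescopeι_comp hπ n.le_succ, ← Category.assoc, hw, zero_comp]
  · obtain ⟨w, rfl⟩ := B.surjective k h
    exact ⟨w ≫ telescopeι B.X 0 ≫ π, by simp only; rw [G.map_comp, Category.assoc, hα]⟩

end Brown

section Representability

variable {T D : Type*} [Category.{v} T] [Category.{v} D] [HasZeroObject T] [HasShift T ℤ]
  [Preadditive T] [∀ n : ℤ, (shiftFunctor T n).Additive] [Pretriangulated T] [HasCoproducts.{v} T]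
  {κ : Type v} {c : κ → T}

lemma IsGeneratingFamily.exists_coneCoproductClosure_iso (hcpt : ∀ k, IsCompactObj (c k))
    (hc : IsGeneratingFamily c) (Z : T) : ∃ L, ConeCoproductClosure c L ∧ Nonempty (L ≅ Z) := by
  obtain ⟨B⟩ := nonempty_killingTower (𝟭 T) c Z
  obtain ⟨L, u, hL, hu⟩ := B.exists_representsAt hcpt
  have := hc.isIso_of_bijective u hu
  exact ⟨L, hL, ⟨asIso u⟩⟩

variable [HasZeroObject D] [HasShift D ℤ] [Preadditive D] [∀ n : ℤ, (shiftFunctor D n).Additive]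
  [Pretriangulated D] (G : T ⥤ D) [G.CommShift ℤ] [G.IsTriangulated]
  [∀ ι : Type v, PreservesColimitsOfShape (Discrete ι) G]

theorem isLeftAdjoint_of_preservesCoproducts (hcpt : ∀ k, IsCompactObj (c k))
    (hc : IsGeneratingFamily c) : G.IsLeftAdjoint := by
  refine Functor.isLeftAdjoint_of_rightAdjointObjIsDefined_eq_top ?_
  ext Y
  simp only [Pi.top_apply, Prop.top_eq_true, iff_true, Functor.rightAdjointObjIsDefined_iff]
  obtain ⟨B⟩ := nonempty_killingTower G c Y
  obtain ⟨R, u, -, hu⟩ := B.exists_representsAt hcpt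
  have hrep (Z : T) : RepresentsAt G u Z := by
    obtain ⟨L, hL, ⟨e⟩⟩ := hc.exists_coneCoproductClosure_iso hcpt Z
    exact ((hL.representsAt_shift hc.isShiftStable hu 0).of_iso
      ((shiftFunctorZero T ℤ).app L).symm).of_iso e.symm
  exact ⟨R, ⟨{
    homEquiv := Equiv.ofBijective _ (hrep _)
    homEquiv_comp f g := G.map_comp_assoc f g u }⟩⟩

end Representability

/-- **Neeman.** Let `T` and `T'` be compactly generated triangulated
categories with small coproducts, and `(F, G)` an adjoint pair with `F : T' ⥤ T` and
`G : T ⥤ T'`. The following are equivalent: (a) `F` preserves compact objects;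
(b) `G` preserves small coproducts; (c) `G` has a right adjoint. -/
theorem statement6
    {T' T : Type u}
    [Category.{v} T'] [HasZeroObject T'] [HasShift T' ℤ] [Preadditive T']
    [∀ n : ℤ, (shiftFunctor T' n).Additive] [Pretriangulated T']
    [HasCoproducts.{v} T']
    [Category.{v} T] [HasZeroObject T] [HasShift T ℤ] [Preadditive T]
    [∀ n : ℤ, (shiftFunctor T n).Additive] [Pretriangulated T]
    [HasCoproducts.{v} T]
    (F : T' ⥤ T) [F.CommShift ℤ] [F.IsTriangulated]
    (G : T ⥤ T') [G.CommShift ℤ] [G.IsTriangulated]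
    (hT' : IsCompactlyGenerated T') (hT : IsCompactlyGenerated T)
    (adj : F ⊣ G) :
    ((∀ X : T', IsCompactObj X → IsCompactObj (F.obj X)) ↔
      (∀ ι : Type v, Nonempty (PreservesColimitsOfShape (Discrete ι) G))) ∧
    ((∀ ι : Type v, Nonempty (PreservesColimitsOfShape (Discrete ι) G)) ↔
      G.IsLeftAdjoint) := by
  obtain ⟨κ', c', hcpt', hc'⟩ := hT'.exists_isGeneratingFamily
  obtain ⟨κ, c, hcpt, hc⟩ := hT.exists_isGeneratingFamily
  refine ⟨⟨fun ha ι => ?_, fun hb X hX => ?_⟩, ⟨fun hb => ?_, fun _ ι => ⟨inferInstance⟩⟩⟩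
  · exact ⟨preservesColimitsOfShape_discrete_of_isCompactObj_obj adj hcpt' hc'
      (fun k => ha _ (hcpt' k)) ι⟩
  · have := fun ι => (hb ι).some
    exact hX.obj_of_adjunction adj
  · have := fun ι => (hb ι).some
    exact isLeftAdjoint_of_preservesCoproducts G hcpt hc

end Paper
end

section
/- In a recollement of compactly generated triangulated categories, the functor j_! detects compact objects: if Z is an object of T'' with j_!(Z) compact in T, then Z is compact in T''. -/
open CategoryTheory Limits Pretriangulated

universe w v u

namespace Paper

section Rec

variable (T' T T'' : Type*)
  [Category T'] [HasZeroObject T'] [HasShift T' ℤ] [Preadditive T']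
  [∀ n : ℤ, (shiftFunctor T' n).Additive] [Pretriangulated T']
  [Category T] [HasZeroObject T] [HasShift T ℤ] [Preadditive T]
  [∀ n : ℤ, (shiftFunctor T n).Additive] [Pretriangulated T]
  [Category T''] [HasZeroObject T''] [HasShift T'' ℤ] [Preadditive T'']
  [∀ n : ℤ, (shiftFunctor T'' n).Additive] [Pretriangulated T'']

/-- A recollement of `T` in terms of `T'` and `T''` (Beilinson–Bernstein–Deligne):
six triangle functors forming two adjoint triples `(i^*, i_*, i^!)` and `(j_!, j^*, j_*)`,
with `i_*`, `j_!`, `j_*` fully faithful, `j^* ∘ i_* = 0`, and for each `X` the two gluing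
distinguished triangles `i_* i^! X → X → j_* j^* X →` and `j_! j^* X → X → i_* i^* X →`
(whose first two maps are the relevant counits and units). -/
structure Recollement where
  iStar : T ⥤ T'
  iS : T' ⥤ T
  iShriek : T ⥤ T'
  jShriek : T'' ⥤ T
  jStar : T ⥤ T''
  jS : T'' ⥤ T
  commShift_iStar : iStar.CommShift ℤ
  isTriangulated_iStar : letI := commShift_iStar; iStar.IsTriangulated
  commShift_iS : iS.CommShift ℤ
  isTriangulated_iS : letI := commShift_iS; iS.IsTriangulated
  commShift_iShriek : iShriek.CommShift ℤ
  isTriangulated_iShriek : letI := commShift_iShriek; iShriek.IsTriangulated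
  commShift_jShriek : jShriek.CommShift ℤ
  isTriangulated_jShriek : letI := commShift_jShriek; jShriek.IsTriangulated
  commShift_jStar : jStar.CommShift ℤ
  isTriangulated_jStar : letI := commShift_jStar; jStar.IsTriangulated
  commShift_jS : jS.CommShift ℤ
  isTriangulated_jS : letI := commShift_jS; jS.IsTriangulated
  adj₁ : iStar ⊣ iS
  adj₂ : iS ⊣ iShriek
  adj₃ : jShriek ⊣ jStar
  adj₄ : jStar ⊣ jS
  iS_full : iS.Full
  iS_faithful : iS.Faithful
  jShriek_full : jShriek.Full
  jShriek_faithful : jShriek.Faithful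
  jS_full : jS.Full
  jS_faithful : jS.Faithful
  zero : ∀ X : T', IsZero (jStar.obj (iS.obj X))
  tri₁ : ∀ X : T, ∃ h : jS.obj (jStar.obj X) ⟶ (iS.obj (iShriek.obj X))⟦(1 : ℤ)⟧,
    Triangle.mk (adj₂.counit.app X) (adj₄.unit.app X) h ∈ distTriang T
  tri₂ : ∀ X : T, ∃ h : iS.obj (iStar.obj X) ⟶ (jShriek.obj (jStar.obj X))⟦(1 : ℤ)⟧,
    Triangle.mk (adj₃.counit.app X) (adj₁.unit.app X) h ∈ distTriang T

end Rec

/-- In a recollement of compactly generated triangulated categories,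
`j_!` detects compact objects: if `j_!(Z)` is compact in `T`, then `Z` is compact. -/
theorem statement8
    {T' T T'' : Type u}
    [Category.{v} T'] [HasZeroObject T'] [HasShift T' ℤ] [Preadditive T']
    [∀ n : ℤ, (shiftFunctor T' n).Additive] [Pretriangulated T'] [HasCoproducts.{v} T']
    [Category.{v} T] [HasZeroObject T] [HasShift T ℤ] [Preadditive T]
    [∀ n : ℤ, (shiftFunctor T n).Additive] [Pretriangulated T] [HasCoproducts.{v} T]
    [Category.{v} T''] [HasZeroObject T''] [HasShift T'' ℤ] [Preadditive T'']
    [∀ n : ℤ, (shiftFunctor T'' n).Additive] [Pretriangulated T''] [HasCoproducts.{v} T'']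
    (hT' : IsCompactlyGenerated T') (hT : IsCompactlyGenerated T)
    (hT'' : IsCompactlyGenerated T'')
    (R : Recollement T' T T'')
    (Z : T'') (hZ : IsCompactObj (R.jShriek.obj Z)) :
    IsCompactObj Z := by
  classical
  set F := R.jShriek with hF
  letI := R.commShift_jShriek
  haveI : R.jShriek.IsTriangulated := R.isTriangulated_jShriek
  haveI : F.Additive := by rw [hF]; infer_instance
  haveI := R.jShriek_full
  haveI := R.jShriek_faithful
  haveI : PreservesColimitsOfSize.{v, v} F := by rw [hF]; exact R.adj₃.leftAdjoint_preservesColimits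
  intro ι _ g c hc
  -- the mapped cofan in T
  let c' : Cofan (fun i => F.obj (g i)) := Cofan.mk (F.obj c.pt) (fun i => F.map (c.inj i))
  have hc' : IsColimit c' := by
    let e : Discrete.functor (fun i => F.obj (g i)) ≅ Discrete.functor g ⋙ F :=
      Discrete.natIso (fun i => Iso.refl _)
    refine (IsColimit.precomposeHomEquiv e (F.mapCocone c)).symm
      (isColimitOfPreserves F hc) |>.ofIsoColimit ?_
    exact Cocones.ext (Iso.refl _) (by rintro ⟨i⟩; simp [e, c', Cofan.inj])
  have hbij := hZ ι (fun i => F.obj (g i)) c' hc'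
  -- componentwise add-equivalences via full faithfulness of F
  let e : ∀ i, (Z ⟶ g i) ≃+ (F.obj Z ⟶ F.obj (g i)) := fun i =>
    { toFun := F.map
      invFun := F.preimage
      left_inv := fun u => F.preimage_map u
      right_inv := fun u => F.map_preimage u
      map_add' := fun u v => F.map_add }
  let α : (DirectSum ι (fun i => Z ⟶ g i)) ≃+ DirectSum ι (fun i => F.obj Z ⟶ F.obj (g i)) :=
    DFinsupp.mapRange.addEquiv e
  set φ : (DirectSum ι (fun i => Z ⟶ g i)) →+ (Z ⟶ c.pt) := DirectSum.toAddMonoid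
    (fun i => AddMonoidHom.mk' (fun u : Z ⟶ g i => u ≫ c.inj i)
      (fun _ _ => Preadditive.add_comp _ _ _ _ _ _)) with hφ
  set ψ : (DirectSum ι (fun i => F.obj Z ⟶ F.obj (g i))) →+ (F.obj Z ⟶ c'.pt) := DirectSum.toAddMonoid
    (fun i => AddMonoidHom.mk' (fun u : F.obj Z ⟶ F.obj (g i) => u ≫ c'.inj i)
      (fun _ _ => Preadditive.add_comp _ _ _ _ _ _)) with hψ
  -- the commuting square : F.mapAddHom ∘ φ = ψ ∘ α
  have hsq : (F.mapAddHom).comp φ = ψ.comp α.toAddMonoidHom := by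
    refine DirectSum.addHom_ext (fun i u => ?_)
    have h1 : φ (DirectSum.of (fun i => Z ⟶ g i) i u) = u ≫ c.inj i := by
      rw [hφ, DirectSum.toAddMonoid_of]; rfl
    have h2 : α (DirectSum.of (fun i => Z ⟶ g i) i u)
        = DirectSum.of (fun i => F.obj Z ⟶ F.obj (g i)) i (F.map u) := by
      exact DFinsupp.mapRange_single (f := fun i => e i) (hf := fun i => (e i).map_zero)
    have h3 : ψ (DirectSum.of (fun i => F.obj Z ⟶ F.obj (g i)) i (F.map u))
        = F.map u ≫ c'.inj i := by
      rw [hψ, DirectSum.toAddMonoid_of]; rfl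
    show F.map (φ (DirectSum.of (fun i => Z ⟶ g i) i u))
      = ψ (α (DirectSum.of (fun i => Z ⟶ g i) i u))
    rw [h1, h2, h3, Functor.map_comp]
    rfl
  have hmap_bij : Function.Bijective (F.mapAddHom (X := Z) (Y := c.pt)) :=
    ⟨fun _ _ h => F.map_injective h, fun v => ⟨F.preimage v, F.map_preimage v⟩⟩
  have : Function.Bijective ((F.mapAddHom).comp φ) := by
    rw [hsq]
    exact hbij.comp α.bijective
  exact (Function.Bijective.of_comp_iff' hmap_bij φ).mp this

end Paper
end
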